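/- arXiv:2208.00781 — 2 statements merged into one kernel-verified Lean document; each statement's English description precedes it below -/
import Mathlib

section
/- Let N ≥ 1 and let f_1,…,f_N ∈ ℝ, a_1,…,a_N ∈ {0,1}, y_1,…,y_N ∈ {0,1} with M = Σ_{i=1}^N y_i and R = Σ_{i=1}^N a_i y_i satisfying 0 < R < M. Then the negated equal-opportunity-difference proxy equals the empirical conditional covariance up to the positive factor M²/(R(M−R)); that is, −μ̃_EOD = (M²/(R(M−R))) · Ĉov(A, f | Y=1), where μ̃_EOD = (Σ_{i=1}^N f_i(1−a_i)y_i)/(Σ_{i=1}^N (1−a_i)y_i) − (Σ_{i=1}^N f_i a_i y_i)/(Σ_{i=1}^N a_i y_i) and Ĉov(A, f | Y=1) = (1/M)Σ_{i=1}^N f_i a_i y_i − (R/M²)Σ_{i=1}^N f_i y_i. -/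
/-- The negated EOD proxy equals the empirical conditional covariance
up to the positive factor `M² / (R (M − R))`. -/
theorem neg_eod_proxy_eq_cond_cov
    (N : ℕ) (hN : 1 ≤ N) (f a y : Fin N → ℝ)
    (ha : ∀ i, a i = 0 ∨ a i = 1)
    (hy : ∀ i, y i = 0 ∨ y i = 1)
    (M R : ℝ) (hM : M = ∑ i, y i) (hR : R = ∑ i, a i * y i)
    (hR0 : 0 < R) (hRM : R < M) :
    -((∑ i, f i * (1 - a i) * y i) / (∑ i, (1 - a i) * y i)
        - (∑ i, f i * a i * y i) / (∑ i, a i * y i))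
      = (M ^ 2 / (R * (M - R)))
          * ((1 / M) * ∑ i, f i * a i * y i
              - (R / M ^ 2) * ∑ i, f i * y i) := by
  have h1 : (∑ i, (1 - a i) * y i) = M - R := by
    simp [sub_mul, Finset.sum_sub_distrib, hM, hR]
  have h2 : (∑ i, f i * (1 - a i) * y i) = (∑ i, f i * y i) - ∑ i, f i * a i * y i := by
    rw [← Finset.sum_sub_distrib]; congr 1; ext i; ring
  rw [h1, h2, ← hR]
  have hM0 : (0:ℝ) < M := lt_trans hR0 hRM
  have hMR : M - R ≠ 0 := by linarith
  field_simp
  ring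
end

section
/- Let N ≥ 1 and let f_1,…,f_N ∈ ℝ, a_1,…,a_N ∈ {0,1}, y_1,…,y_N ∈ {0,1} with M = Σ_{i=1}^N y_i and R = Σ_{i=1}^N a_i y_i satisfying 0 < R < M. Then μ̃_EOD = 0 if and only if Ĉov(A, f | Y=1) = 0; moreover μ̃_EOD ≤ 0 if and only if Ĉov(A, f | Y=1) ≥ 0, where μ̃_EOD = (Σ_{i=1}^N f_i(1−a_i)y_i)/(Σ_{i=1}^N (1−a_i)y_i) − (Σ_{i=1}^N f_i a_i y_i)/(Σ_{i=1}^N a_i y_i) and Ĉov(A, f | Y=1) = (1/M)Σ_{i=1}^N f_i a_i y_i − (R/M²)Σ_{i=1}^N f_i y_i. -/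
/-- The EOD proxy vanishes iff the empirical conditional covariance
vanishes, and is nonpositive iff the conditional covariance is nonnegative. -/
theorem eod_proxy_zero_iff_cond_cov_zero
    (N : ℕ) (hN : 1 ≤ N) (f a y : Fin N → ℝ)
    (ha : ∀ i, a i = 0 ∨ a i = 1)
    (hy : ∀ i, y i = 0 ∨ y i = 1)
    (M R : ℝ) (hM : M = ∑ i, y i) (hR : R = ∑ i, a i * y i)
    (hR0 : 0 < R) (hRM : R < M) :
    (((∑ i, f i * (1 - a i) * y i) / (∑ i, (1 - a i) * y i)
        - (∑ i, f i * a i * y i) / (∑ i, a i * y i)) = 0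
      ↔ ((1 / M) * ∑ i, f i * a i * y i
            - (R / M ^ 2) * ∑ i, f i * y i) = 0)
    ∧ (((∑ i, f i * (1 - a i) * y i) / (∑ i, (1 - a i) * y i)
        - (∑ i, f i * a i * y i) / (∑ i, a i * y i)) ≤ 0
      ↔ 0 ≤ ((1 / M) * ∑ i, f i * a i * y i
            - (R / M ^ 2) * ∑ i, f i * y i)) := by
  have hM0 : 0 < M := hR0.trans hRM
  have hMR : 0 < M - R := sub_pos.mpr hRM
  have h1 : (∑ i, (1 - a i) * y i) = M - R := by
    have : ∀ i ∈ Finset.univ, (1 - a i) * y i = y i - a i * y i := fun i _ => by ring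
    rw [Finset.sum_congr rfl this, Finset.sum_sub_distrib, ← hM, ← hR]
  have h2 : (∑ i, f i * (1 - a i) * y i)
      = (∑ i, f i * y i) - (∑ i, f i * a i * y i) := by
    have : ∀ i ∈ Finset.univ, f i * (1 - a i) * y i
        = f i * y i - f i * a i * y i := fun i _ => by ring
    rw [Finset.sum_congr rfl this, Finset.sum_sub_distrib]
  set F := ∑ i, f i * y i with hF
  set S := ∑ i, f i * a i * y i with hS
  rw [h1, h2, ← hR]
  have hkey : (F - S) / (M - R) - S / R
      = -(M ^ 2 / (R * (M - R))) * ((1 / M) * S - (R / M ^ 2) * F) := by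
    field_simp
    ring
  have hc : 0 < M ^ 2 / (R * (M - R)) := by positivity
  rw [hkey]
  constructor
  · constructor
    · intro h
      rcases mul_eq_zero.mp h with h' | h'
      · exact absurd (neg_eq_zero.mp h') (ne_of_gt hc)
      · exact h'
    · intro h; rw [h, mul_zero]
  · rw [neg_mul, neg_nonpos]
    exact ⟨fun h => nonneg_of_mul_nonneg_right h hc, fun h => mul_nonneg hc.le h⟩
end
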